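/- arXiv:2204.00253 — 3 statements merged into one kernel-verified Lean document; each statement's English description precedes it below -/
import Mathlib

section
/- If {I_α}_{α∈A} is a finite family of bounded intervals on ℝ and τ > 0, then B_τ · |⋃_α τI_α| ≤ |⋃_α I_α| ≤ C_τ · |⋃_α τI_α|, where C_τ = max{τ, 1/τ} and B_τ = min{τ, 1/τ}, with |·| denoting Lebesgue measure. -/
open MeasureTheory

/-- `dilate τ a b` is the interval with the same center as `[a,b]` and `τ` times its length. -/
def dilate (τ a b : ℝ) : Set ℝ :=
  Set.Icc ((a + b) / 2 - τ * (b - a) / 2) ((a + b) / 2 + τ * (b - a) / 2)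

lemma dilate_subset_dilate {τ a b c d : ℝ} (hτ : 1 ≤ τ) (hab : a ≤ b)
    (hca : c ≤ a) (hbd : b ≤ d) : dilate τ a b ⊆ dilate τ c d := by
  apply Set.Icc_subset_Icc <;> nlinarith

lemma Icc_subset_dilate {τ a b : ℝ} (hτ : 1 ≤ τ) (hab : a ≤ b) :
    Set.Icc a b ⊆ dilate τ a b := by
  apply Set.Icc_subset_Icc <;> nlinarith

lemma dilate_subset_Icc {τ a b : ℝ} (hτ0 : 0 ≤ τ) (hτ : τ ≤ 1) (hab : a ≤ b) :
    dilate τ a b ⊆ Set.Icc a b := by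
  apply Set.Icc_subset_Icc <;> nlinarith

lemma volume_dilate {τ a b : ℝ} :
    volume (dilate τ a b) = ENNReal.ofReal (τ * (b - a)) := by
  rw [dilate, Real.volume_Icc]
  congr 1
  ring

lemma dilate_dilate {τ : ℝ} (a b : ℝ) (hτ : 0 < τ) :
    dilate τ⁻¹ ((a + b) / 2 - τ * (b - a) / 2) ((a + b) / 2 + τ * (b - a) / 2)
      = Set.Icc a b := by
  unfold dilate
  have hτ' : τ ≠ 0 := hτ.ne'
  congr 1 <;> field_simp <;> ring

/-- The key lemma: for `τ ≥ 1`, the union of the dilates has measure at most `τ` times the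
measure of the union. -/
lemma key {ι : Type} (A : Finset ι) (a b : ι → ℝ) (hab : ∀ α ∈ A, a α ≤ b α)
    (τ : ℝ) (hτ : 1 ≤ τ) :
    volume (⋃ α ∈ A, dilate τ (a α) (b α)) ≤
      ENNReal.ofReal τ * volume (⋃ α ∈ A, Set.Icc (a α) (b α)) := by
  set U := ⋃ α ∈ A, Set.Icc (a α) (b α) with hU
  have hUbdd : BddAbove U ∧ BddBelow U := by
    constructor
    · exact (Set.Finite.bddAbove_biUnion A.finite_toSet).2 fun α _ => bddAbove_Icc
    · exact (Set.Finite.bddBelow_biUnion A.finite_toSet).2 fun α _ => bddBelow_Icc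
  classical
  set B : Finset (Set ℝ) := A.image (fun α => connectedComponentIn U (a α)) with hB
  -- basic facts about members of B
  have hIccU : ∀ α ∈ A, Set.Icc (a α) (b α) ⊆ U := fun α hα =>
    Set.subset_biUnion_of_mem (u := fun α => Set.Icc (a α) (b α)) hα
  have haU : ∀ α ∈ A, a α ∈ U := fun α hα =>
    hIccU α hα (Set.left_mem_Icc.2 (hab α hα))
  have hIccJ : ∀ α ∈ A, Set.Icc (a α) (b α) ⊆ connectedComponentIn U (a α) := fun α hα =>
    isPreconnected_Icc.subset_connectedComponentIn (Set.left_mem_Icc.2 (hab α hα))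
      (hIccU α hα)
  have hBU : ∀ s ∈ B, s ⊆ U := by
    intro s hs
    obtain ⟨α, hα, rfl⟩ := Finset.mem_image.1 hs
    exact connectedComponentIn_subset U (a α)
  have hBconn : ∀ s ∈ B, IsConnected s := by
    intro s hs
    obtain ⟨α, hα, rfl⟩ := Finset.mem_image.1 hs
    exact ⟨⟨a α, mem_connectedComponentIn (haU α hα)⟩, isPreconnected_connectedComponentIn⟩
  have hBbdd : ∀ s ∈ B, BddBelow s ∧ BddAbove s := fun s hs =>
    ⟨hUbdd.2.mono (hBU s hs), hUbdd.1.mono (hBU s hs)⟩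
  have hBIcc : ∀ s ∈ B, s ⊆ Set.Icc (sInf s) (sSup s) := fun s hs =>
    subset_Icc_csInf_csSup (hBbdd s hs).1 (hBbdd s hs).2
  have hBIoo : ∀ s ∈ B, Set.Ioo (sInf s) (sSup s) ⊆ s := fun s hs =>
    (hBconn s hs).Ioo_csInf_csSup_subset (hBbdd s hs).1 (hBbdd s hs).2
  have hBle : ∀ s ∈ B, sInf s ≤ sSup s := fun s hs =>
    Real.sInf_le_sSup s (hBbdd s hs).1 (hBbdd s hs).2
  have hτ0 : (0:ℝ) ≤ τ := le_trans zero_le_one hτ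
  -- step 1 : the union of dilates is contained in the union of dilates of components
  have step1 : (⋃ α ∈ A, dilate τ (a α) (b α)) ⊆
      ⋃ s ∈ B, dilate τ (sInf s) (sSup s) := by
    refine Set.iUnion₂_subset fun α hα => ?_
    set s := connectedComponentIn U (a α) with hs
    have hsB : s ∈ B := Finset.mem_image.2 ⟨α, hα, rfl⟩
    have h1 : Set.Icc (a α) (b α) ⊆ Set.Icc (sInf s) (sSup s) :=
      (hIccJ α hα).trans (hBIcc s hsB)
    have h2 := h1 (Set.left_mem_Icc.2 (hab α hα))
    have h3 := h1 (Set.right_mem_Icc.2 (hab α hα))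
    exact (dilate_subset_dilate hτ (hab α hα) h2.1 h3.2).trans
      (Set.subset_iUnion₂ (s := fun s _ => dilate τ (sInf s) (sSup s)) s hsB)
  -- step 2 : the open intervals of distinct components are pairwise disjoint
  have hdisj : Set.PairwiseDisjoint (B : Set (Set ℝ)) (fun s : Set ℝ => Set.Ioo (sInf s) (sSup s)) := by
    intro s hsB t htB hst
    have hdisj' : Disjoint s t := by
      rw [Set.disjoint_iff_inter_eq_empty]
      by_contra h
      obtain ⟨z, hzs, hzt⟩ := Set.nonempty_iff_ne_empty.2 h
      obtain ⟨α, hα, rfl⟩ := Finset.mem_image.1 hsB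
      obtain ⟨β, hβ, rfl⟩ := Finset.mem_image.1 htB
      exact hst ((connectedComponentIn_eq hzs).trans (connectedComponentIn_eq hzt).symm)
    exact hdisj'.mono (hBIoo s hsB) (hBIoo t htB)
  -- chained computation
  calc volume (⋃ α ∈ A, dilate τ (a α) (b α))
      ≤ volume (⋃ s ∈ B, dilate τ (sInf s) (sSup s)) := measure_mono step1
    _ ≤ ∑ s ∈ B, volume (dilate τ (sInf s) (sSup s)) := measure_biUnion_finset_le B _
    _ = ∑ s ∈ B, ENNReal.ofReal τ * volume (Set.Ioo (sInf s) (sSup s)) := by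
        refine Finset.sum_congr rfl fun s hs => ?_
        rw [volume_dilate, Real.volume_Ioo, ← ENNReal.ofReal_mul hτ0]
    _ = ENNReal.ofReal τ * ∑ s ∈ B, volume (Set.Ioo (sInf s) (sSup s)) := by
        rw [Finset.mul_sum]
    _ = ENNReal.ofReal τ * volume (⋃ s ∈ B, Set.Ioo (sInf s) (sSup s)) := by
        rw [measure_biUnion_finset hdisj (fun s _ => measurableSet_Ioo)]
    _ ≤ ENNReal.ofReal τ * volume U := by
        refine mul_le_mul_right (measure_mono ?_) _
        exact Set.iUnion₂_subset fun s hs => (hBIoo s hs).trans (hBU s hs)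

/-- Comparison of the measure of a finite union of intervals with the union of their
`τ`-dilates: `B_τ ⋅ |⋃ τI_α| ≤ |⋃ I_α| ≤ C_τ ⋅ |⋃ τI_α|` with `C_τ = max (τ, τ⁻¹)`,
`B_τ = min (τ, τ⁻¹)`. -/
theorem stmt_1 {ι : Type} (A : Finset ι) (a b : ι → ℝ) (hab : ∀ α ∈ A, a α ≤ b α)
    (τ : ℝ) (hτ : 0 < τ) :
    ENNReal.ofReal (min τ τ⁻¹) * volume (⋃ α ∈ A, dilate τ (a α) (b α)) ≤
        volume (⋃ α ∈ A, Set.Icc (a α) (b α)) ∧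
      volume (⋃ α ∈ A, Set.Icc (a α) (b α)) ≤
        ENNReal.ofReal (max τ τ⁻¹) * volume (⋃ α ∈ A, dilate τ (a α) (b α)) := by
  rcases le_or_gt 1 τ with h1 | h1
  · have hinv : τ⁻¹ ≤ τ := le_trans (inv_le_one_of_one_le₀ h1) h1
    rw [min_eq_right hinv, max_eq_left hinv]
    constructor
    · have hk := key A a b hab τ h1
      calc ENNReal.ofReal τ⁻¹ * volume (⋃ α ∈ A, dilate τ (a α) (b α))
          ≤ ENNReal.ofReal τ⁻¹ * (ENNReal.ofReal τ *
              volume (⋃ α ∈ A, Set.Icc (a α) (b α))) := mul_le_mul_right hk _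
        _ = volume (⋃ α ∈ A, Set.Icc (a α) (b α)) := by
            rw [← mul_assoc, ← ENNReal.ofReal_mul (by positivity),
              inv_mul_cancel₀ hτ.ne', ENNReal.ofReal_one, one_mul]
    · have hsub : (⋃ α ∈ A, Set.Icc (a α) (b α)) ⊆ ⋃ α ∈ A, dilate τ (a α) (b α) :=
        Set.iUnion₂_mono fun α hα => Icc_subset_dilate h1 (hab α hα)
      calc volume (⋃ α ∈ A, Set.Icc (a α) (b α))
          ≤ volume (⋃ α ∈ A, dilate τ (a α) (b α)) := measure_mono hsub
        _ ≤ ENNReal.ofReal τ * volume (⋃ α ∈ A, dilate τ (a α) (b α)) :=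
            le_mul_of_one_le_left' (ENNReal.one_le_ofReal.2 h1)
  · have hinv : τ ≤ τ⁻¹ := le_trans h1.le (one_le_inv₀ hτ |>.2 h1.le)
    have hinv1 : 1 ≤ τ⁻¹ := (one_le_inv₀ hτ).2 h1.le
    rw [min_eq_left hinv, max_eq_right hinv]
    constructor
    · have hsub : (⋃ α ∈ A, dilate τ (a α) (b α)) ⊆ ⋃ α ∈ A, Set.Icc (a α) (b α) :=
        Set.iUnion₂_mono fun α hα => dilate_subset_Icc hτ.le h1.le (hab α hα)
      calc ENNReal.ofReal τ * volume (⋃ α ∈ A, dilate τ (a α) (b α))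
          ≤ 1 * volume (⋃ α ∈ A, Set.Icc (a α) (b α)) :=
            mul_le_mul' (ENNReal.ofReal_le_one.2 h1.le) (measure_mono hsub)
        _ = volume (⋃ α ∈ A, Set.Icc (a α) (b α)) := one_mul _
    · have hab' : ∀ α ∈ A, (a α + b α) / 2 - τ * (b α - a α) / 2 ≤
          (a α + b α) / 2 + τ * (b α - a α) / 2 := by
        intro α hα
        have := hab α hα
        nlinarith
      have hk := key A (fun α => (a α + b α) / 2 - τ * (b α - a α) / 2)
        (fun α => (a α + b α) / 2 + τ * (b α - a α) / 2) hab' τ⁻¹ hinv1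
      have h2 : (⋃ α ∈ A, dilate τ⁻¹ ((a α + b α) / 2 - τ * (b α - a α) / 2)
          ((a α + b α) / 2 + τ * (b α - a α) / 2)) = ⋃ α ∈ A, Set.Icc (a α) (b α) := by
        refine Set.iUnion₂_congr fun α hα => dilate_dilate (a α) (b α) hτ
      have h3 : (⋃ α ∈ A, Set.Icc ((a α + b α) / 2 - τ * (b α - a α) / 2)
          ((a α + b α) / 2 + τ * (b α - a α) / 2)) = ⋃ α ∈ A, dilate τ (a α) (b α) := rfl
      rw [h2, h3] at hk
      exact hk
end

section
/- Fix μ > 0. For any finite family of bounded intervals {I_α}_{α∈A} on ℝ and any scalars {t_α}_{α∈A} ⊂ ℝ satisfying |t_α| < μ·|I_α| for all α, there are constants c(μ), C(μ) > 0 depending only on μ such that c(μ)·|⋃_α I_α| ≤ |⋃_α (t_α + I_α)| ≤ C(μ)·|⋃_α I_α|. In particular one may take c(μ) = 1/(3·3·(1+μ)). -/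
/-!
Write `[a, b]` as the closed ball of radius `r = (b - a)/2` about its midpoint; if
`|t| ≤ δ (b - a)`, the translate `t + [a, b]` lies in the concentric ball of radius `(1 + 2δ) r`.
The Vitali covering lemma (with enlargement factor `4 > 3`) extracts a disjoint subfamily of these
enlarged balls whose 4-fold enlargements cover their union, so the union of the translates has
measure at most `4 (1 + 2δ)` times the union of the intervals. The lower bound is the same
estimate with the roles of `I` and `t + I` exchanged (translate back by `-t`, and
`|-t| < μ |t + I|`), using `4 (1 + 2μ) ≤ 9 (1 + μ)`.
-/

open MeasureTheory Metric Module

section AddHaar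

variable {E : Type*} [NormedAddCommGroup E] [NormedSpace ℝ E] [MeasurableSpace E] [BorelSpace E]
  [FiniteDimensional ℝ E] (μ : Measure E) [μ.IsAddHaarMeasure]

theorem addHaar_closedBall_mul_radius (x : E) {K r : ℝ} (hK : 0 ≤ K) (hr : 0 ≤ r) :
    μ (closedBall x (K * r)) = ENNReal.ofReal (K ^ finrank ℝ E) * μ (closedBall x r) := by
  rw [Measure.addHaar_closedBall' μ x (mul_nonneg hK hr), Measure.addHaar_closedBall' μ x hr,
    mul_pow, ENNReal.ofReal_mul (pow_nonneg hK _), mul_assoc]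

theorem addHaar_biUnion_le_of_subset_closedBall {ι : Type*} (A : Finset ι) (x : ι → E)
    (r : ι → ℝ) (hr : ∀ α ∈ A, 0 ≤ r α) (s : ι → Set E) {ρ : ℝ} (hρ : 1 ≤ ρ)
    (hs : ∀ α ∈ A, s α ⊆ closedBall (x α) (ρ * r α)) :
    μ (⋃ α ∈ A, s α) ≤
      ENNReal.ofReal ((4 * ρ) ^ finrank ℝ E) * μ (⋃ α ∈ A, closedBall (x α) (r α)) := by
  have hρr : ∀ α ∈ A, 0 ≤ ρ * r α := fun α hα => mul_nonneg (by linarith) (hr α hα)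
  obtain ⟨u, huA, hdisj, hcover⟩ :=
    Vitali.exists_disjoint_subfamily_covering_enlargement_closedBall (A : Set ι) x
      (fun α => ρ * r α) (∑ α ∈ A, ρ * r α) (fun α hα => A.single_le_sum hρr hα) 4
      (by norm_num)
  lift u to Finset ι using A.finite_toSet.subset huA
  rw [Finset.coe_subset] at huA
  have hdisj' : (u : Set ι).PairwiseDisjoint fun α => closedBall (x α) (r α) :=
    hdisj.mono_on fun α hα =>
      closedBall_subset_closedBall (le_mul_of_one_le_left (hr α (huA hα)) hρ)
  calc μ (⋃ α ∈ A, s α)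
      ≤ μ (⋃ β ∈ u, closedBall (x β) (4 * ρ * r β)) := by
        refine measure_mono (Set.iUnion₂_mono' fun α hα => ?_)
        obtain ⟨β, hβ, hαβ⟩ := hcover α hα
        exact ⟨β, hβ, (hs α hα).trans (by rwa [mul_assoc])⟩
    _ ≤ ∑ β ∈ u, μ (closedBall (x β) (4 * ρ * r β)) := measure_biUnion_finset_le _ _
    _ = ENNReal.ofReal ((4 * ρ) ^ finrank ℝ E) * ∑ β ∈ u, μ (closedBall (x β) (r β)) := by
        rw [Finset.mul_sum]
        refine Finset.sum_congr rfl fun β hβ => ?_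
        exact addHaar_closedBall_mul_radius μ _ (by linarith) (hr β (huA hβ))
    _ = ENNReal.ofReal ((4 * ρ) ^ finrank ℝ E) * μ (⋃ β ∈ u, closedBall (x β) (r β)) := by
        rw [measure_biUnion_finset hdisj' fun β _ => measurableSet_closedBall]
    _ ≤ ENNReal.ofReal ((4 * ρ) ^ finrank ℝ E) * μ (⋃ α ∈ A, closedBall (x α) (r α)) := by
        gcongr _ * μ ?_
        exact Set.iUnion₂_mono' fun β hβ => ⟨β, huA hβ, subset_rfl⟩

end AddHaar

theorem volume_biUnion_Icc_add_le {ι : Type*} (A : Finset ι) (a b t : ι → ℝ) {δ : ℝ}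
    (hδ : 0 ≤ δ) (hab : ∀ α ∈ A, a α ≤ b α) (ht : ∀ α ∈ A, |t α| ≤ δ * (b α - a α)) :
    volume (⋃ α ∈ A, Set.Icc (t α + a α) (t α + b α)) ≤
      ENNReal.ofReal (4 * (1 + 2 * δ)) * volume (⋃ α ∈ A, Set.Icc (a α) (b α)) := by
  have hsub : ∀ α ∈ A, Set.Icc (t α + a α) (t α + b α) ⊆
      closedBall ((a α + b α) / 2) ((1 + 2 * δ) * ((b α - a α) / 2)) := by
    intro α hα z hz
    have htα := abs_le.1 ((ht α hα).trans_eq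
      (by ring : δ * (b α - a α) = 2 * δ * ((b α - a α) / 2)))
    rw [mem_closedBall, Real.dist_eq, abs_le]
    constructor <;> linarith [hz.1, hz.2, htα.1, htα.2]
  have h := addHaar_biUnion_le_of_subset_closedBall volume A (fun α => (a α + b α) / 2)
    (fun α => (b α - a α) / 2) (fun α hα => by linarith [hab α hα]) _ (by linarith) hsub
  simpa only [finrank_self, pow_one, ← Real.Icc_eq_closedBall] using h

/-- Union of translated intervals is comparable to the union of the original intervals,
with constants depending only on `μ`, provided each translation satisfies `|t_α| < μ|I_α|`.
In particular one may take the lower constant `c(μ) = 1/(3⋅3⋅(1+μ))`. -/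
theorem stmt_3 (μ : ℝ) (hμ : 0 < μ) :
    ∃ C : ℝ, 0 < C ∧
      ∀ (ι : Type) (A : Finset ι) (a b t : ι → ℝ),
        (∀ α ∈ A, a α ≤ b α) →
        (∀ α ∈ A, |t α| < μ * (b α - a α)) →
        ENNReal.ofReal (1 / (3 * 3 * (1 + μ))) * volume (⋃ α ∈ A, Set.Icc (a α) (b α)) ≤
            volume (⋃ α ∈ A, Set.Icc (t α + a α) (t α + b α)) ∧
          volume (⋃ α ∈ A, Set.Icc (t α + a α) (t α + b α)) ≤
            ENNReal.ofReal C * volume (⋃ α ∈ A, Set.Icc (a α) (b α)) := by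
  refine ⟨4 * (1 + 2 * μ), by positivity, fun ι A a b t hab ht => ⟨?_, ?_⟩⟩
  · have hback := volume_biUnion_Icc_add_le A (fun α => t α + a α) (fun α => t α + b α)
      (fun α => -t α) hμ.le (fun α hα => by linarith [hab α hα])
      (fun α hα => by rw [abs_neg, add_sub_add_left_eq_sub]; exact (ht α hα).le)
    simp only [neg_add_cancel_left] at hback
    calc ENNReal.ofReal (1 / (3 * 3 * (1 + μ))) * volume (⋃ α ∈ A, Set.Icc (a α) (b α))
        ≤ ENNReal.ofReal (1 / (3 * 3 * (1 + μ))) * (ENNReal.ofReal (4 * (1 + 2 * μ)) *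
            volume (⋃ α ∈ A, Set.Icc (t α + a α) (t α + b α))) := by gcongr
      _ = ENNReal.ofReal (4 * (1 + 2 * μ) / (3 * 3 * (1 + μ))) *
            volume (⋃ α ∈ A, Set.Icc (t α + a α) (t α + b α)) := by
        rw [← mul_assoc, ← ENNReal.ofReal_mul (by positivity), one_div_mul_eq_div]
      _ ≤ volume (⋃ α ∈ A, Set.Icc (t α + a α) (t α + b α)) := by
        refine mul_le_of_le_one_left' (ENNReal.ofReal_le_one.2 ?_)
        rw [div_le_one (by positivity)]
        linarith
  · exact volume_biUnion_Icc_add_le A a b t hμ.le hab fun α hα => (ht α hα).le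
end

section
/- Geometric estimate I: Fix 0 < τ ≤ 1 and a finite family of parallelograms {u_i}_{i∈I} ⊂ S (parallelograms with two vertical sides). For each i, let s_i ∈ S be a parallelogram with s_i ⊆ u_i, having the same horizontal extent (length) as u_i, and with |s_i| ≥ τ|u_i|. Then |⋃_i s_i| ≥ (τ/3)·|⋃_i u_i|. -/
/-!
Cut both unions by the vertical line `{x} × ℝ`. Since `s_i` and `u_i` have the same horizontal
extent, the slices are intervals `J_i ⊆ I_i` over the same set of indices, and comparing areas
gives `|J_i| ≥ τ |I_i|`. Austin's covering lemma (choose the longest interval, discard every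
interval meeting it, repeat) yields a disjoint subfamily `B` whose threefold enlargements cover
`⋃ I_i`, so `τ |⋃ I_i| ≤ 3 ∑_{j ∈ B} τ |I_j| ≤ 3 ∑_{j ∈ B} |J_j| ≤ 3 |⋃ J_i|`.
Integrating this over `x` gives the claim.
-/

open MeasureTheory

/-- A parallelogram with two vertical sides: horizontal extent `[q,p]`, lower edge the line
`y = c + m x`, and (vertical) width `w`. Its vertices are `(q, c+mq)`, `(q, c+mq+w)`,
`(p, c+mp)`, `(p, c+mp+w)`. -/
def vpar (q p c m w : ℝ) : Set (ℝ × ℝ) :=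
  {z | z.1 ∈ Set.Icc q p ∧ z.2 ∈ Set.Icc (c + m * z.1) (c + m * z.1 + w)}

open Set Metric Finset ENNReal

section Covering

variable {ι α : Type*}

theorem exists_disjoint_subfamily_covering_three_mul_closedBall [PseudoMetricSpace α]
    (x : ι → α) (r : ι → ℝ) (A : Finset ι) :
    ∃ B ⊆ A, (B : Set ι).PairwiseDisjoint (fun i ↦ closedBall (x i) (r i)) ∧
      ∀ i ∈ A, ∃ j ∈ B, closedBall (x i) (r i) ⊆ closedBall (x j) (3 * r j) := by
  classical
  induction A using Finset.strongInduction with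
  | H A ih =>
  rcases A.eq_empty_or_nonempty with rfl | hA
  · exact ⟨∅, by simp⟩
  obtain ⟨i₀, hi₀, hmax⟩ := A.exists_max_image r hA
  -- `i₀` is erased explicitly: its ball may be empty, hence disjoint from itself.
  obtain ⟨B, hBC, hBdisj, hBcov⟩ :=
    ih ((A.erase i₀).filter fun i ↦ Disjoint (closedBall (x i) (r i)) (closedBall (x i₀) (r i₀)))
      ((filter_subset _ _).trans_ssubset (erase_ssubset hi₀))
  refine ⟨insert i₀ B, insert_subset hi₀ (hBC.trans ((filter_subset _ _).trans
    (erase_subset _ _))), ?_, fun i hi ↦ ?_⟩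
  · rw [coe_insert]
    exact hBdisj.insert fun j hj _ ↦ (mem_filter.1 (hBC hj)).2.symm
  by_cases hdisj : Disjoint (closedBall (x i) (r i)) (closedBall (x i₀) (r i₀))
  · by_cases hii₀ : i = i₀
    · subst hii₀
      exact ⟨i, mem_insert_self _ _, by simp [disjoint_self.1 hdisj]⟩
    obtain ⟨j, hj, hij⟩ := hBcov i (mem_filter.2 ⟨mem_erase.2 ⟨hii₀, hi⟩, hdisj⟩)
    exact ⟨j, mem_insert_of_mem hj, hij⟩
  · refine ⟨i₀, mem_insert_self _ _, closedBall_subset_closedBall' ?_⟩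
    have := dist_le_add_of_nonempty_closedBall_inter_closedBall
      (not_disjoint_iff_nonempty_inter.1 hdisj)
    linarith [hmax i hi]

theorem mul_measure_biUnion_closedBall_le [PseudoMetricSpace α] [MeasurableSpace α]
    (μ : Measure α) {K : ℝ≥0∞} (hK : ∀ y r, μ (closedBall y (3 * r)) ≤ K * μ (closedBall y r))
    (A : Finset ι) (x : ι → α) (r : ι → ℝ) {J : ι → Set α}
    (hJ : ∀ i ∈ A, J i ⊆ closedBall (x i) (r i)) (hJm : ∀ i ∈ A, MeasurableSet (J i))
    {τ : ℝ≥0∞} (hτ : ∀ i ∈ A, τ * μ (closedBall (x i) (r i)) ≤ μ (J i)) :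
    τ * μ (⋃ i ∈ A, closedBall (x i) (r i)) ≤ K * μ (⋃ i ∈ A, J i) := by
  obtain ⟨B, hBA, hBdisj, hBcov⟩ := exists_disjoint_subfamily_covering_three_mul_closedBall x r A
  have hcover : ⋃ i ∈ A, closedBall (x i) (r i) ⊆ ⋃ j ∈ B, closedBall (x j) (3 * r j) :=
    iUnion₂_subset fun i hi ↦
      let ⟨j, hj, hij⟩ := hBcov i hi
      subset_iUnion₂_of_subset j hj hij
  calc τ * μ (⋃ i ∈ A, closedBall (x i) (r i))
      ≤ τ * ∑ j ∈ B, μ (closedBall (x j) (3 * r j)) := by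
        gcongr
        exact (measure_mono hcover).trans (measure_biUnion_finset_le _ _)
    _ ≤ τ * ∑ j ∈ B, K * μ (closedBall (x j) (r j)) := by gcongr; exact hK _ _
    _ = K * ∑ j ∈ B, τ * μ (closedBall (x j) (r j)) := by
        simp only [mul_sum, mul_left_comm τ K]
    _ ≤ K * ∑ j ∈ B, μ (J j) := by gcongr with j hj; exact hτ j (hBA hj)
    _ = K * μ (⋃ j ∈ B, J j) := by
        rw [measure_biUnion_finset (hBdisj.mono_on fun j hj ↦ hJ j (hBA hj))
          fun j hj ↦ hJm j (hBA hj)]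
    _ ≤ K * μ (⋃ i ∈ A, J i) := by
        gcongr K * μ ?_; exact biUnion_subset_biUnion_left (coe_subset.2 hBA)

theorem Real.volume_closedBall_three_mul (y r : ℝ) :
    volume (closedBall y (3 * r)) = 3 * volume (closedBall y r) := by
  rw [Real.volume_closedBall, Real.volume_closedBall, ← ofReal_ofNat 3,
    ← ofReal_mul (by norm_num)]
  ring_nf

theorem Real.mul_volume_biUnion_Icc_le (A : Finset ι) (a b : ι → ℝ) {J : ι → Set ℝ}
    (hJ : ∀ i ∈ A, J i ⊆ Icc (a i) (b i)) (hJm : ∀ i ∈ A, MeasurableSet (J i))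
    {τ : ℝ≥0∞} (hτ : ∀ i ∈ A, τ * volume (Icc (a i) (b i)) ≤ volume (J i)) :
    τ * volume (⋃ i ∈ A, Icc (a i) (b i)) ≤ 3 * volume (⋃ i ∈ A, J i) := by
  simp only [Real.Icc_eq_closedBall] at *
  exact mul_measure_biUnion_closedBall_le volume
    (fun y r ↦ (Real.volume_closedBall_three_mul y r).le) A _ _ hJ hJm hτ

end Covering

theorem MeasureTheory.Measure.mul_prod_apply_le_of_forall_preimage {α β : Type*}
    [MeasurableSpace α] [MeasurableSpace β] (μ : Measure α) (ν : Measure β) [SFinite ν]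
    {s t : Set (α × β)} (hs : MeasurableSet s) (ht : MeasurableSet t) {c d : ℝ≥0∞}
    (h : ∀ x, c * ν (Prod.mk x ⁻¹' s) ≤ d * ν (Prod.mk x ⁻¹' t)) :
    c * μ.prod ν s ≤ d * μ.prod ν t := by
  rw [Measure.prod_apply hs, Measure.prod_apply ht,
    ← lintegral_const_mul _ (measurable_measure_prodMk_left hs),
    ← lintegral_const_mul _ (measurable_measure_prodMk_left ht)]
  exact lintegral_mono h

section Parallelogram

theorem measurableSet_vpar (q p c m w : ℝ) : MeasurableSet (vpar q p c m w) :=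
  (measurable_fst measurableSet_Icc).inter <|
    (measurableSet_le (by fun_prop) measurable_snd).inter
      (measurableSet_le measurable_snd (by fun_prop))

theorem preimage_vpar (q p c m w x : ℝ) :
    Prod.mk x ⁻¹' vpar q p c m w =
      if x ∈ Icc q p then Icc (c + m * x) (c + m * x + w) else ∅ := by
  ext y
  simp only [vpar, Set.mem_preimage, mem_ofPred_eq]
  split_ifs with hx
  · simp only [hx, true_and]
  · simp only [hx, false_and, mem_empty_iff_false]

theorem volume_vpar (q p c m w : ℝ) :
    volume (vpar q p c m w) = ENNReal.ofReal w * ENNReal.ofReal (p - q) := by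
  have hslice : ∀ x, volume (Prod.mk x ⁻¹' vpar q p c m w) =
      (Icc q p).indicator (fun _ ↦ ENNReal.ofReal w) x := by
    intro x
    rw [preimage_vpar]
    split_ifs with hx <;> simp [hx, Real.volume_Icc]
  rw [Measure.volume_eq_prod, Measure.prod_apply (measurableSet_vpar q p c m w)]
  simp_rw [hslice]
  rw [lintegral_indicator_const measurableSet_Icc, Real.volume_Icc]

theorem preimage_biUnion_vpar {ι : Type*} (A : Finset ι) (q p c m w : ι → ℝ)
    (x : ℝ) :
    Prod.mk x ⁻¹' ⋃ i ∈ A, vpar (q i) (p i) (c i) (m i) (w i) =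
      ⋃ i ∈ A.filter (fun i ↦ x ∈ Icc (q i) (p i)), Icc (c i + m i * x) (c i + m i * x + w i) := by
  ext y
  simp only [preimage_iUnion, mem_iUnion, preimage_vpar, mem_filter, exists_prop]
  refine exists_congr fun i ↦ ?_
  by_cases hx : x ∈ Icc (q i) (p i) <;> simp [hx]

end Parallelogram

theorem stmt_8_general (τ : ℝ)
    {ι : Type} (A : Finset ι) (q p c m w c' m' w' : ι → ℝ)
    (hqp : ∀ i ∈ A, q i < p i)
    (hsub : ∀ i ∈ A, vpar (q i) (p i) (c' i) (m' i) (w' i) ⊆ vpar (q i) (p i) (c i) (m i) (w i))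
    (harea : ∀ i ∈ A,
      ENNReal.ofReal τ * volume (vpar (q i) (p i) (c i) (m i) (w i)) ≤
        volume (vpar (q i) (p i) (c' i) (m' i) (w' i))) :
    ENNReal.ofReal (τ / 3) * volume (⋃ i ∈ A, vpar (q i) (p i) (c i) (m i) (w i)) ≤
      volume (⋃ i ∈ A, vpar (q i) (p i) (c' i) (m' i) (w' i)) := by
  have hwidth : ∀ i ∈ A, ENNReal.ofReal τ * ENNReal.ofReal (w i) ≤ ENNReal.ofReal (w' i) := by
    intro i hi
    have h := harea i hi
    rw [volume_vpar, volume_vpar, ← mul_assoc] at h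
    exact (ENNReal.mul_le_mul_iff_left (by simpa using hqp i hi) ofReal_ne_top).1 h
  have hslices : ENNReal.ofReal τ * volume (⋃ i ∈ A, vpar (q i) (p i) (c i) (m i) (w i)) ≤
      3 * volume (⋃ i ∈ A, vpar (q i) (p i) (c' i) (m' i) (w' i)) := by
    rw [Measure.volume_eq_prod]
    refine Measure.mul_prod_apply_le_of_forall_preimage _ _
      (A.measurableSet_biUnion fun _ _ ↦ measurableSet_vpar _ _ _ _ _)
      (A.measurableSet_biUnion fun _ _ ↦ measurableSet_vpar _ _ _ _ _) fun x ↦ ?_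
    rw [preimage_biUnion_vpar, preimage_biUnion_vpar]
    refine Real.mul_volume_biUnion_Icc_le _ _ _ (fun i hi ↦ ?_) (fun _ _ ↦ measurableSet_Icc)
      fun i hi ↦ ?_
    · obtain ⟨hiA, hx⟩ := mem_filter.1 hi
      simpa [preimage_vpar, hx] using preimage_mono (f := Prod.mk x) (hsub i hiA)
    · simpa [Real.volume_Icc] using hwidth i (mem_filter.1 hi).1
  rw [ofReal_div_of_pos three_pos, ofReal_ofNat, ← ENNReal.mul_div_right_comm]
  exact ENNReal.div_le_of_le_mul' hslices

/-- Geometric estimate I: if each `s_i ⊆ u_i` is a parallelogram with the same horizontal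
extent as `u_i` and `|s_i| ≥ τ|u_i|`, then `|⋃ s_i| ≥ (τ/3)|⋃ u_i|`. -/
theorem stmt_8 (τ : ℝ) (hτ0 : 0 < τ) (hτ1 : τ ≤ 1)
    {ι : Type} (A : Finset ι) (q p c m w c' m' w' : ι → ℝ)
    (hqp : ∀ i ∈ A, q i < p i) (hw : ∀ i ∈ A, 0 < w i) (hw' : ∀ i ∈ A, 0 < w' i)
    (hsub : ∀ i ∈ A, vpar (q i) (p i) (c' i) (m' i) (w' i) ⊆ vpar (q i) (p i) (c i) (m i) (w i))
    (harea : ∀ i ∈ A,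
      ENNReal.ofReal τ * volume (vpar (q i) (p i) (c i) (m i) (w i)) ≤
        volume (vpar (q i) (p i) (c' i) (m' i) (w' i))) :
    ENNReal.ofReal (τ / 3) * volume (⋃ i ∈ A, vpar (q i) (p i) (c i) (m i) (w i)) ≤
      volume (⋃ i ∈ A, vpar (q i) (p i) (c' i) (m' i) (w' i)) :=
  stmt_8_general τ A q p c m w c' m' w' hqp hsub harea
end
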